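/- Completeness of the sized DPLL proof system: for every consistent valuation Γ and every CNF formula Δ, either there exists a model M with M ⊨ Γ and M ⊨ Δ, or there is a natural number n such that Γ ⊢ⁿ Δ is derivable in the sized DPLL proof system. -/
import Mathlib


/-- A literal: a propositional variable (ℕ) with a sign. -/
structure Lit where
  var : ℕ
  sign : Bool
deriving DecidableEq

/-- The opposite literal. -/
def Lit.neg (l : Lit) : Lit := ⟨l.var, !l.sign⟩

/-- A clause: a finite set of literals, read disjunctively. -/
abbrev Clause := Finset Lit

/-- A CNF formula: a finite set of clauses, read conjunctively. -/
abbrev CNF := Finset Clause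

/-- A valuation: a finite set of literals, read conjunctively. -/
abbrev Valu := Finset Lit

/-- A model: a boolean assignment to literals respecting negation. -/
def IsModel (M : Lit → Bool) : Prop := ∀ l : Lit, M l = true ↔ ¬ (M (Lit.neg l) = true)

/-- `M ⊨ Γ` for a valuation (set of literals) `Γ`. -/
def SatVal (M : Lit → Bool) (Γ : Valu) : Prop := ∀ l ∈ Γ, M l = true

/-- `M ⊨ Δ` for a CNF formula `Δ`. -/
def SatCNF (M : Lit → Bool) (Δ : CNF) : Prop := ∀ C ∈ Δ, ∃ l ∈ C, M l = true

/-- A consistent valuation. -/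
def Consistent (Γ : Valu) : Prop := ∀ l ∈ Γ, Lit.neg l ∉ Γ

/-- The DPLL derivability relation `Γ ⊢ Δ`. -/
inductive DPLL : Valu → CNF → Prop
  | conflict (Γ : Valu) (Δ : CNF) : (∅ : Clause) ∈ Δ → DPLL Γ Δ
  | unit (Γ : Valu) (Δ : CNF) (l : Lit) : ({l} : Clause) ∈ Δ →
      DPLL (insert l Γ) (Δ.erase {l}) → DPLL Γ Δ
  | elim (Γ : Valu) (Δ : CNF) (C : Clause) (l : Lit) : l ∈ Γ → l ∈ C → C ∈ Δ →
      DPLL Γ (Δ.erase C) → DPLL Γ Δ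
  | red (Γ : Valu) (Δ : CNF) (C : Clause) (l : Lit) : l ∈ Γ → Lit.neg l ∈ C → C ∈ Δ →
      DPLL Γ (insert (C.erase (Lit.neg l)) (Δ.erase C)) → DPLL Γ Δ
  | split (Γ : Valu) (Δ : CNF) (l : Lit) :
      DPLL (insert l Γ) Δ → DPLL (insert (Lit.neg l) Γ) Δ → DPLL Γ Δ

/-- The sized DPLL derivability relation `Γ ⊢ⁿ Δ`. -/
inductive DPLLn : Valu → ℕ → CNF → Prop
  | conflict (Γ : Valu) (Δ : CNF) : (∅ : Clause) ∈ Δ → DPLLn Γ 0 Δ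
  | unit (Γ : Valu) (Δ : CNF) (l : Lit) (n : ℕ) : ({l} : Clause) ∈ Δ →
      DPLLn (insert l Γ) n (Δ.erase {l}) → DPLLn Γ (n + 1) Δ
  | elim (Γ : Valu) (Δ : CNF) (C : Clause) (l : Lit) (n : ℕ) : l ∈ Γ → l ∈ C → C ∈ Δ →
      DPLLn Γ n (Δ.erase C) → DPLLn Γ (n + 1) Δ
  | red (Γ : Valu) (Δ : CNF) (C : Clause) (l : Lit) (n : ℕ) : l ∈ Γ → Lit.neg l ∈ C → C ∈ Δ →
      DPLLn Γ n (insert (C.erase (Lit.neg l)) (Δ.erase C)) → DPLLn Γ (n + 1) Δ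
  | split (Γ : Valu) (Δ : CNF) (l : Lit) (n m : ℕ) :
      DPLLn (insert l Γ) n Δ → DPLLn (insert (Lit.neg l) Γ) m Δ → DPLLn Γ (n + m + 1) Δ

/-- The sized resolution derivability relation `Δ ⊢ᵣⁿ C`. -/
inductive Res : CNF → ℕ → Clause → Prop
  | sub (Δ : CNF) (C₀ C : Clause) : C₀ ∈ Δ → C₀ ⊆ C → Res Δ 0 C
  | res (Δ : CNF) (C C' : Clause) (l : Lit) (n m : ℕ) :
      Res Δ n (insert l C) → Res Δ m (insert (Lit.neg l) C') → Res Δ (n + m + 1) (C ∪ C')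

-- aux lemmas
lemma Lit.neg_neg (l : Lit) : l.neg.neg = l := by cases l; simp [Lit.neg]

lemma Lit.neg_ne (l : Lit) : l.neg ≠ l := by
  cases l with | mk v s => cases s <;> simp [Lit.neg]

lemma Lit.eq_or_eq_neg {l m : Lit} (h : m.var = l.var) : m = l ∨ m = l.neg := by
  cases l with | mk v s => cases m with | mk w t =>
  simp only [Lit.neg] at *
  subst h
  rcases Bool.eq_or_eq_not t s with h | h <;> [left; right] <;> simp [h]

lemma consistent_insert {Γ : Valu} {l : Lit} (hΓ : Consistent Γ) (hn : l.neg ∉ Γ) :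
    Consistent (insert l Γ) := by
  intro m hm
  simp only [Finset.mem_insert] at hm ⊢
  push_neg
  rcases hm with rfl | hm
  · exact ⟨Lit.neg_ne m, hn⟩
  · refine ⟨?_, hΓ m hm⟩
    rintro rfl
    rw [Lit.neg_neg] at hn
    exact hn hm

noncomputable def modelOf (Γ : Valu) : Lit → Bool :=
  fun l => if l ∈ Γ then true else if l.neg ∈ Γ then false else l.sign

lemma modelOf_isModel {Γ : Valu} (hΓ : Consistent Γ) : IsModel (modelOf Γ) := by
  intro l
  unfold modelOf
  by_cases h1 : l ∈ Γ
  · have h2 : l.neg ∉ Γ := hΓ l h1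
    simp [h1, h2, Lit.neg_neg]
  · by_cases h2 : l.neg ∈ Γ
    · simp [h1, h2, Lit.neg_neg]
    · cases l with | mk v s => cases s <;> simp [h1, h2, Lit.neg_neg, Lit.neg] at *

lemma modelOf_satVal {Γ : Valu} : SatVal (modelOf Γ) Γ := by
  intro l hl; simp [modelOf, hl]

def decidedVars (Γ : Valu) : Finset ℕ := Γ.image Lit.var
def cnfVars (Δ : CNF) : Finset ℕ := Δ.biUnion (fun C => C.image Lit.var)

def mu (Γ : Valu) (Δ : CNF) : ℕ :=
  (∑ C ∈ Δ, (C.card + 1)) + (cnfVars Δ \ decidedVars Γ).card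

lemma dplln_aux : ∀ k (Γ : Valu) (Δ : CNF), mu Γ Δ ≤ k → Consistent Γ →
    (∃ M : Lit → Bool, IsModel M ∧ SatVal M Γ ∧ SatCNF M Δ) ∨ ∃ n : ℕ, DPLLn Γ n Δ := by
  intro k
  induction k using Nat.strong_induction_on with
  | _ k ih =>
  intro Γ Δ hk hΓ
  by_cases h0 : (∅ : Clause) ∈ Δ
  · exact Or.inr ⟨0, DPLLn.conflict Γ Δ h0⟩
  by_cases hemp : Δ = ∅
  · subst hemp
    exact Or.inl ⟨modelOf Γ, modelOf_isModel hΓ, modelOf_satVal, by simp [SatCNF]⟩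
  have hsum_erase : ∀ C ∈ Δ, (∑ C' ∈ Δ.erase C, (C'.card + 1)) + (C.card + 1) = ∑ C' ∈ Δ, (C'.card + 1) := by
    intro C hC
    exact Finset.sum_erase_add _ _ hC
  have hvars_mono : ∀ {Δ' : CNF}, Δ' ⊆ Δ → cnfVars Δ' ⊆ cnfVars Δ := by
    intro Δ' h
    exact Finset.biUnion_subset_biUnion_of_subset_left _ h
  by_cases helim : ∃ C ∈ Δ, ∃ l ∈ Γ, l ∈ C
  · obtain ⟨C, hC, l, hlΓ, hlC⟩ := helim
    have hμ : mu Γ (Δ.erase C) < mu Γ Δ := by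
      unfold mu
      have h1 : (∑ C' ∈ Δ.erase C, (C'.card + 1)) < ∑ C' ∈ Δ, (C'.card + 1) := by
        rw [← hsum_erase C hC]; omega
      have h2 : (cnfVars (Δ.erase C) \ decidedVars Γ).card ≤ (cnfVars Δ \ decidedVars Γ).card :=
        Finset.card_le_card (Finset.sdiff_subset_sdiff (hvars_mono (Finset.erase_subset _ _)) le_rfl)
      omega
    have := ih (mu Γ (Δ.erase C)) (lt_of_lt_of_le hμ hk) Γ (Δ.erase C) le_rfl hΓ
    rcases this with ⟨M, hM, hV, hS⟩ | ⟨n, hn⟩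
    · refine Or.inl ⟨M, hM, hV, ?_⟩
      intro C' hC'
      by_cases hCC : C' = C
      · exact ⟨l, hCC ▸ hlC, hV l hlΓ⟩
      · exact hS C' (Finset.mem_erase.2 ⟨hCC, hC'⟩)
    · exact Or.inr ⟨n + 1, DPLLn.elim Γ Δ C l n hlΓ hlC hC hn⟩
  by_cases hred : ∃ C ∈ Δ, ∃ l ∈ Γ, l.neg ∈ C
  · obtain ⟨C, hC, l, hlΓ, hlC⟩ := hred
    set C' : Clause := C.erase l.neg with hC'def
    set Δ' : CNF := insert C' (Δ.erase C) with hΔ'def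
    have hCcard : C'.card + 1 = C.card := by
      rw [hC'def, Finset.card_erase_of_mem hlC]
      have : 1 ≤ C.card := Finset.card_pos.2 ⟨l.neg, hlC⟩
      omega
    have hμ : mu Γ Δ' < mu Γ Δ := by
      unfold mu
      have h1 : (∑ D ∈ Δ', (D.card + 1)) < ∑ D ∈ Δ, (D.card + 1) := by
        have hle : (∑ D ∈ Δ', (D.card + 1)) ≤ (C'.card + 1) + ∑ D ∈ Δ.erase C, (D.card + 1) := by
          by_cases hmem : C' ∈ Δ.erase C
          · rw [hΔ'def, Finset.insert_eq_self.2 hmem]; omega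
          · rw [hΔ'def, Finset.sum_insert hmem]
        rw [← hsum_erase C hC]
        omega
      have h2 : cnfVars Δ' ⊆ cnfVars Δ := by
        intro v hv
        rw [hΔ'def, cnfVars, Finset.mem_biUnion] at hv
        obtain ⟨D, hD, hvD⟩ := hv
        rcases Finset.mem_insert.1 hD with rfl | hD
        · refine Finset.mem_biUnion.2 ⟨C, hC, ?_⟩
          obtain ⟨x, hx, rfl⟩ := Finset.mem_image.1 hvD
          exact Finset.mem_image.2 ⟨x, Finset.mem_of_mem_erase hx, rfl⟩
        · exact Finset.mem_biUnion.2 ⟨D, Finset.mem_of_mem_erase hD, hvD⟩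
      have h2' : (cnfVars Δ' \ decidedVars Γ).card ≤ (cnfVars Δ \ decidedVars Γ).card :=
        Finset.card_le_card (Finset.sdiff_subset_sdiff h2 le_rfl)
      omega
    have := ih (mu Γ Δ') (lt_of_lt_of_le hμ hk) Γ Δ' le_rfl hΓ
    rcases this with ⟨M, hM, hV, hS⟩ | ⟨n, hn⟩
    · refine Or.inl ⟨M, hM, hV, ?_⟩
      intro D hD
      by_cases hDC : D = C
      · obtain ⟨x, hx, hMx⟩ := hS C' (Finset.mem_insert_self _ _)
        exact ⟨x, hDC ▸ Finset.mem_of_mem_erase hx, hMx⟩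
      · exact hS D (Finset.mem_insert.2 (Or.inr (Finset.mem_erase.2 ⟨hDC, hD⟩)))
    · exact Or.inr ⟨n + 1, DPLLn.red Γ Δ C l n hlΓ hlC hC hn⟩
  -- split case
  push_neg at helim hred
  obtain ⟨C, hC⟩ := Finset.nonempty_iff_ne_empty.2 hemp
  obtain ⟨l, hlC⟩ := Finset.nonempty_iff_ne_empty.2 (fun h : C = ∅ => h0 (h ▸ hC))
  have hundec : ∀ m ∈ Γ, m.var ≠ l.var := by
    intro m hm heq
    rcases Lit.eq_or_eq_neg heq with rfl | rfl
    · exact helim C hC m hm hlC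
    · exact hred C hC l.neg hm (by rwa [Lit.neg_neg])
  have hlΓ : l ∉ Γ := fun h => hundec l h rfl
  have hlnΓ : l.neg ∉ Γ := fun h => hundec l.neg h rfl
  have hvar_mem : l.var ∈ cnfVars Δ \ decidedVars Γ := by
    refine Finset.mem_sdiff.2 ⟨Finset.mem_biUnion.2 ⟨C, hC, Finset.mem_image.2 ⟨l, hlC, rfl⟩⟩, ?_⟩
    intro h
    obtain ⟨m, hm, hmv⟩ := Finset.mem_image.1 h
    exact hundec m hm hmv
  have hcard : ∀ l' : Lit, l'.var = l.var →
      (cnfVars Δ \ decidedVars (insert l' Γ)).card < (cnfVars Δ \ decidedVars Γ).card := by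
    intro l' hl'
    apply Finset.card_lt_card
    constructor
    · intro v hv
      rw [Finset.mem_sdiff, decidedVars, Finset.image_insert] at hv
      exact Finset.mem_sdiff.2 ⟨hv.1, fun h => hv.2 (Finset.mem_insert_of_mem h)⟩
    · intro hsub
      have := hsub hvar_mem
      rw [Finset.mem_sdiff, decidedVars, Finset.image_insert] at this
      exact this.2 (by rw [hl']; exact Finset.mem_insert_self _ _)
  have hμ : ∀ l' : Lit, l'.var = l.var → mu (insert l' Γ) Δ < mu Γ Δ := by
    intro l' hl'
    unfold mu
    have := hcard l' hl'
    omega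
  have r1 := ih (mu (insert l Γ) Δ) (lt_of_lt_of_le (hμ l rfl) hk) (insert l Γ) Δ le_rfl
    (consistent_insert hΓ hlnΓ)
  have r2 := ih (mu (insert l.neg Γ) Δ) (lt_of_lt_of_le (hμ l.neg rfl) hk) (insert l.neg Γ) Δ le_rfl
    (consistent_insert hΓ (by rwa [Lit.neg_neg]))
  rcases r1 with ⟨M, hM, hV, hS⟩ | ⟨n, hn⟩
  · exact Or.inl ⟨M, hM, fun m hm => hV m (Finset.mem_insert_of_mem hm), hS⟩
  rcases r2 with ⟨M, hM, hV, hS⟩ | ⟨m, hm⟩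
  · exact Or.inl ⟨M, hM, fun x hx => hV x (Finset.mem_insert_of_mem hx), hS⟩
  exact Or.inr ⟨n + m + 1, DPLLn.split Γ Δ l n m hn hm⟩

/-- Completeness of the sized DPLL proof system. -/
theorem dplln_completeness (Γ : Valu) (Δ : CNF) (hΓ : Consistent Γ) :
    (∃ M : Lit → Bool, IsModel M ∧ SatVal M Γ ∧ SatCNF M Δ) ∨ ∃ n : ℕ, DPLLn Γ n Δ :=
  dplln_aux (mu Γ Δ) Γ Δ le_rfl hΓ
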